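/- arXiv:2505.09552 — 5 statements merged into one kernel-verified Lean document; each statement's English description precedes it below -/
import Mathlib

section
/- Let M = Σ^{-1} + Z^T W Z with block structure M = [[D1, Z1^T W Z2],[Z2^T W Z1, D2]], where D1, D2 are the diagonal blocks (which are themselves diagonal matrices), and let L = [[0,0],[Z2^T W Z1, 0]] be the strictly lower-triangular block part and D = diag(D1, D2). Then the SSOR-preconditioned matrix satisfies P^{-1/2} M P^{-T/2} = I_m − [[0,0],[0, D2^{-1/2} Z2^T W Z1 D1^{-1} Z1^T W Z2 D2^{-1/2}]], where P = (L+D) D^{-1} (L+D)^T and P^{-1/2} = D^{1/2}(L+D)^{-1}. -/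
/-!
With `N = L + D` block lower triangular, `M = N + Nᵀ - D`. Conjugating by `D^{-1/2}` turns `N`
into the unit lower triangular `[[1, 0], [C, 1]]` and `M` into `[[1, Cᵀ], [C, 1]]`, where
`C = D2^{-1/2} B D1^{-1/2}` and `B = Z2ᵀ W Z1`; one step of block elimination then gives
`[[1, 0], [-C, 1]] [[1, Cᵀ], [C, 1]] [[1, -Cᵀ], [0, 1]] = [[1, 0], [0, 1 - C Cᵀ]]`.
-/

open Matrix

theorem inv_sqrt_mul_mul_inv_sqrt {x : ℝ} (hx : 0 < x) : (√x)⁻¹ * x * (√x)⁻¹ = 1 := by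
  have := Real.sqrt_pos.2 hx
  field_simp
  exact (Real.sq_sqrt hx.le).symm

theorem inv_sqrt_mul_inv_sqrt {x : ℝ} (hx : 0 ≤ x) : (√x)⁻¹ * (√x)⁻¹ = x⁻¹ := by
  rw [← mul_inv, Real.mul_self_sqrt hx]

namespace Matrix

theorem diagonal_eq_fromBlocks {m n α : Type*} [DecidableEq m] [DecidableEq n] [Zero α]
    (d : m ⊕ n → α) :
    diagonal d = fromBlocks (diagonal fun i => d (.inl i)) 0 0 (diagonal fun j => d (.inr j)) := by
  rw [fromBlocks_diagonal]
  congr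
  ext (i | j) <;> rfl

theorem IsDiag.eq_diagonal {n α : Type*} [Zero α] [DecidableEq n] {A : Matrix n n α}
    (hA : A.IsDiag) {d : n → α} (hd : ∀ i, A i i = d i) : A = diagonal d := by
  rw [← hA.diagonal_diag]
  exact congrArg diagonal (funext hd)

theorem transpose_mul_diagonal_mul_self_apply_self_nonneg {ι κ : Type*} [Fintype ι] [Finite κ]
    [DecidableEq ι] {w : ι → ℝ} (hw : ∀ k, 0 ≤ w k) (A : Matrix ι κ ℝ) (i : κ) :
    0 ≤ (Aᵀ * diagonal w * A) i i :=
  ((posSemidef_diagonal_iff.2 hw).conjTranspose_mul_mul_same A).diag_nonneg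

variable {m n R : Type*} [Fintype m] [Fintype n] [DecidableEq m] [DecidableEq n]

theorem diagonal_mul_fromBlocks_mul_diagonal [Semiring R] (e : m ⊕ n → R)
    (A : Matrix m m R) (B : Matrix m n R) (C : Matrix n m R) (D : Matrix n n R) :
    diagonal e * fromBlocks A B C D * diagonal e =
      fromBlocks (diagonal (fun i => e (.inl i)) * A * diagonal fun i => e (.inl i))
        (diagonal (fun i => e (.inl i)) * B * diagonal fun j => e (.inr j))
        (diagonal (fun j => e (.inr j)) * C * diagonal fun i => e (.inl i))
        (diagonal (fun j => e (.inr j)) * D * diagonal fun j => e (.inr j)) := by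
  simp only [diagonal_eq_fromBlocks e, fromBlocks_multiply, Matrix.mul_zero, Matrix.zero_mul,
    add_zero, zero_add]

theorem inv_fromBlocks_one_zero_one [CommRing R] (C : Matrix n m R) :
    (fromBlocks 1 0 C 1 : Matrix (m ⊕ n) (m ⊕ n) R)⁻¹ = fromBlocks 1 0 (-C) 1 := by
  refine inv_eq_left_inv ?_
  simp [fromBlocks_multiply, ← fromBlocks_one]

theorem inv_fromBlocks_one_zero_one_conj [CommRing R] (C : Matrix n m R) :
    (fromBlocks 1 0 C 1)⁻¹ * fromBlocks 1 Cᵀ C 1 * ((fromBlocks 1 0 C 1)⁻¹)ᵀ =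
      1 - fromBlocks 0 0 0 (C * Cᵀ) := by
  rw [inv_fromBlocks_one_zero_one, fromBlocks_transpose, ← fromBlocks_one, sub_eq_add_neg,
    fromBlocks_neg, fromBlocks_add]
  simp [fromBlocks_multiply, add_comm]

theorem mul_inv_mul_mul_inv_transpose_mul_of_rescale [CommRing R] {S S' N A : Matrix m m R}
    (hS : S * S' = 1) (hS' : S' * S = 1) (hSt : Sᵀ = S) :
    S * N⁻¹ * A * (N⁻¹)ᵀ * S = (S' * N * S')⁻¹ * (S' * A * S') * ((S' * N * S')⁻¹)ᵀ := by
  have hinv : S'⁻¹ = S := inv_eq_left_inv hS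
  simp only [Matrix.mul_inv_rev, hinv, transpose_mul, hSt, Matrix.mul_assoc]
  simp only [← Matrix.mul_assoc S S', ← Matrix.mul_assoc S' S, hS, hS', Matrix.one_mul]

theorem diagonal_inv_sqrt_mul_diagonal_mul_diagonal_inv_sqrt {d : m → ℝ} (hd : ∀ i, 0 < d i) :
    diagonal (fun i => (√(d i))⁻¹) * diagonal d * diagonal (fun i => (√(d i))⁻¹) = 1 := by
  rw [diagonal_mul_diagonal, diagonal_mul_diagonal, ← diagonal_one]
  exact congrArg diagonal (funext fun i => inv_sqrt_mul_mul_inv_sqrt (hd i))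

theorem sqrt_diagonal_conj_inv_fromBlocks {d : m ⊕ n → ℝ} (hd : ∀ i, 0 < d i)
    (B : Matrix n m ℝ) :
    diagonal (fun i => √(d i))
        * (fromBlocks (diagonal fun i => d (.inl i)) 0 B (diagonal fun j => d (.inr j)))⁻¹
        * fromBlocks (diagonal fun i => d (.inl i)) Bᵀ B (diagonal fun j => d (.inr j))
        * ((fromBlocks (diagonal fun i => d (.inl i)) 0 B (diagonal fun j => d (.inr j)))⁻¹)ᵀ
        * diagonal (fun i => √(d i)) =
      1 - fromBlocks 0 0 0
        (diagonal (fun j => (√(d (.inr j)))⁻¹) * B * diagonal (fun i => (d (.inl i))⁻¹) * Bᵀ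
          * diagonal fun j => (√(d (.inr j)))⁻¹) := by
  have hsqrt_ne : ∀ i, √(d i) ≠ 0 := fun i => (Real.sqrt_pos.2 (hd i)).ne'
  have hS : diagonal (fun i => √(d i)) * diagonal (fun i => (√(d i))⁻¹) = 1 := by
    rw [diagonal_mul_diagonal, ← diagonal_one]
    exact congrArg diagonal (funext fun i => mul_inv_cancel₀ (hsqrt_ne i))
  have hS' : diagonal (fun i => (√(d i))⁻¹) * diagonal (fun i => √(d i)) = 1 := by
    rw [diagonal_mul_diagonal, ← diagonal_one]
    exact congrArg diagonal (funext fun i => inv_mul_cancel₀ (hsqrt_ne i))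
  set C := diagonal (fun j => (√(d (.inr j)))⁻¹) * B * diagonal fun i => (√(d (.inl i)))⁻¹
  have hN : diagonal (fun i => (√(d i))⁻¹) * fromBlocks (diagonal fun i => d (.inl i)) 0 B
      (diagonal fun j => d (.inr j)) * diagonal (fun i => (√(d i))⁻¹) = fromBlocks 1 0 C 1 := by
    rw [diagonal_mul_fromBlocks_mul_diagonal,
      diagonal_inv_sqrt_mul_diagonal_mul_diagonal_inv_sqrt fun i => hd (.inl i),
      diagonal_inv_sqrt_mul_diagonal_mul_diagonal_inv_sqrt fun j => hd (.inr j)]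
    simp [C]
  have hM : diagonal (fun i => (√(d i))⁻¹) * fromBlocks (diagonal fun i => d (.inl i)) Bᵀ B
      (diagonal fun j => d (.inr j)) * diagonal (fun i => (√(d i))⁻¹) = fromBlocks 1 Cᵀ C 1 := by
    rw [diagonal_mul_fromBlocks_mul_diagonal,
      diagonal_inv_sqrt_mul_diagonal_mul_diagonal_inv_sqrt fun i => hd (.inl i),
      diagonal_inv_sqrt_mul_diagonal_mul_diagonal_inv_sqrt fun j => hd (.inr j)]
    simp [C, transpose_mul, Matrix.mul_assoc]
  rw [mul_inv_mul_mul_inv_transpose_mul_of_rescale hS hS' (diagonal_transpose _), hN, hM,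
    inv_fromBlocks_one_zero_one_conj]
  simp only [C, transpose_mul, diagonal_transpose, Matrix.mul_assoc]
  rw [← Matrix.mul_assoc (diagonal fun i => (√(d (.inl i)))⁻¹), diagonal_mul_diagonal]
  simp only [inv_sqrt_mul_inv_sqrt (hd _).le]

end Matrix

/-- SSOR block identity: for `K = 2` crossed random effects with
`M = Σ⁻¹ + Zᵀ W Z = [[D1, Z1ᵀWZ2],[Z2ᵀWZ1, D2]]` (the diagonal blocks `D1, D2` being
diagonal matrices), `L` the strictly lower block-triangular part and `D = diag(D1,D2)`,
the SSOR preconditioner `P = (L+D)D⁻¹(L+D)ᵀ` with `P^{-1/2} = D^{1/2}(L+D)⁻¹` satisfies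
`P^{-1/2} M P^{-T/2} = I − [[0,0],[0, D2^{-1/2} Z2ᵀWZ1 D1⁻¹ Z1ᵀWZ2 D2^{-1/2}]]`. -/
theorem stmt2 {n m1 m2 : ℕ}
    (w : Fin n → ℝ) (sinv : Fin m1 ⊕ Fin m2 → ℝ)
    (Z1 : Matrix (Fin n) (Fin m1) ℝ) (Z2 : Matrix (Fin n) (Fin m2) ℝ)
    (hw : ∀ k, 0 < w k) (hs : ∀ i, 0 < sinv i)
    -- the diagonal blocks of `M` are diagonal matrices
    (hdiag1 : ∀ i j : Fin m1, i ≠ j → (Z1ᵀ * Matrix.diagonal w * Z1) i j = 0)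
    (hdiag2 : ∀ i j : Fin m2, i ≠ j → (Z2ᵀ * Matrix.diagonal w * Z2) i j = 0)
    (M : Matrix (Fin m1 ⊕ Fin m2) (Fin m1 ⊕ Fin m2) ℝ)
    (hM : M = Matrix.diagonal sinv
        + (fromCols Z1 Z2)ᵀ * Matrix.diagonal w * fromCols Z1 Z2)
    (d : Fin m1 ⊕ Fin m2 → ℝ) (hd : ∀ i, d i = M i i)
    (L : Matrix (Fin m1 ⊕ Fin m2) (Fin m1 ⊕ Fin m2) ℝ)
    (hL : L = fromBlocks 0 0 (Z2ᵀ * Matrix.diagonal w * Z1) 0) :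
    Matrix.diagonal (fun i => Real.sqrt (d i)) * (L + Matrix.diagonal d)⁻¹ * M
        * ((L + Matrix.diagonal d)⁻¹)ᵀ * Matrix.diagonal (fun i => Real.sqrt (d i))
      = 1 - fromBlocks 0 0 0
          (Matrix.diagonal (fun j : Fin m2 => (Real.sqrt (d (Sum.inr j)))⁻¹)
            * (Z2ᵀ * Matrix.diagonal w * Z1)
            * Matrix.diagonal (fun i : Fin m1 => (d (Sum.inl i))⁻¹)
            * (Z1ᵀ * Matrix.diagonal w * Z2)
            * Matrix.diagonal (fun j : Fin m2 => (Real.sqrt (d (Sum.inr j)))⁻¹)) := by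
  have hBt : (Z2ᵀ * diagonal w * Z1)ᵀ = Z1ᵀ * diagonal w * Z2 := by
    simp only [transpose_mul, diagonal_transpose, transpose_transpose, Matrix.mul_assoc]
  have hM_blocks : M = fromBlocks (diagonal (fun i => sinv (.inl i)) + Z1ᵀ * diagonal w * Z1)
      (Z1ᵀ * diagonal w * Z2) (Z2ᵀ * diagonal w * Z1)
      (diagonal (fun j => sinv (.inr j)) + Z2ᵀ * diagonal w * Z2) := by
    rw [hM, transpose_fromCols, fromRows_mul, fromRows_mul_fromCols, diagonal_eq_fromBlocks,
      fromBlocks_add, zero_add, zero_add]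
  have hd_pos : ∀ i, 0 < d i := fun i => by
    rw [hd, hM, Matrix.add_apply, diagonal_apply_eq]
    exact add_pos_of_pos_of_nonneg (hs i)
      (transpose_mul_diagonal_mul_self_apply_self_nonneg (fun k => (hw k).le) _ _)
  have hD1 : diagonal (fun i => sinv (.inl i)) + Z1ᵀ * diagonal w * Z1
      = diagonal fun i => d (.inl i) :=
    ((isDiag_diagonal _).add fun i j => hdiag1 i j).eq_diagonal fun i => by
      rw [hd, hM_blocks]; rfl
  have hD2 : diagonal (fun j => sinv (.inr j)) + Z2ᵀ * diagonal w * Z2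
      = diagonal fun j => d (.inr j) :=
    ((isDiag_diagonal _).add fun i j => hdiag2 i j).eq_diagonal fun j => by
      rw [hd, hM_blocks]; rfl
  have hLD : L + diagonal d = fromBlocks (diagonal fun i => d (.inl i)) 0
      (Z2ᵀ * diagonal w * Z1) (diagonal fun j => d (.inr j)) := by
    rw [hL, diagonal_eq_fromBlocks d, fromBlocks_add]
    simp
  rw [hM_blocks, hD1, hD2, hLD, ← hBt]
  exact sqrt_diagonal_conj_inv_fromBlocks hd_pos _
end

section
/- For K=2, a Gaussian likelihood (W = σ^{-2} I_n), and a balanced design with every random effect realization occurring exactly d times in each grouping (d = n/m1 = n/m2), the smallest eigenvalue of the SSOR-preconditioned matrix equals exactly λ_min = 1 − (1/(σ²/(σ1² d) + 1))·(1/(σ²/(σ2² d) + 1)). -/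
/-!
With `e = d/σ²` and `cₖ = σₖ⁻² + e`, balance gives `ZₖᵀWZₖ = e I`, so the system matrix is
`M = [[c₁ I, A], [Aᵀ, c₂ I]]` with `A = Z₁ᵀWZ₂` entrywise nonnegative and all row and column sums
of `A` equal to `e`. The SSOR factor `L + D = [[c₁ I, 0], [Aᵀ, c₂ I]]` is exactly the lower factor
of the block `LDLᵀ` factorization of `M`, so the preconditioned matrix is
`diag(I, I - (c₁c₂)⁻¹ AᵀA)`. By the Schur test `‖Av‖ ≤ e‖v‖`, so every Rayleigh quotient is at
least `1 - e²/(c₁c₂)`, and the vector that is `0` on the first block and `1` on the second attains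
this value.
-/

open Matrix Finset

namespace Matrix

structure IsBalancedIncidence {ι κ : Type*} [Fintype ι] [Fintype κ] (Z : Matrix ι κ ℝ) (d : ℝ) :
    Prop where
  zero_or_one : ∀ k j, Z k j = 0 ∨ Z k j = 1
  sum_row : ∀ k, ∑ j, Z k j = 1
  sum_col : ∀ j, ∑ k, Z k j = d

namespace IsBalancedIncidence

variable {ι κ : Type*} [Fintype ι] [Fintype κ] {Z : Matrix ι κ ℝ} {d : ℝ}

theorem nonneg (h : IsBalancedIncidence Z d) (k : ι) (j : κ) : 0 ≤ Z k j := by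
  rcases h.zero_or_one k j with h | h <;> simp [h]

theorem mul_eq_zero_of_ne (h : IsBalancedIncidence Z d) (k : ι) {j j' : κ} (hjj' : j ≠ j') :
    Z k j * Z k j' = 0 := by
  classical
  rcases h.zero_or_one k j with hj | hj
  · rw [hj, zero_mul]
  rcases h.zero_or_one k j' with hj' | hj'
  · rw [hj', mul_zero]
  have hle : ∑ i ∈ {j, j'}, Z k i ≤ ∑ i, Z k i :=
    sum_le_sum_of_subset_of_nonneg (subset_univ _) fun i _ _ => h.nonneg k i
  rw [sum_pair hjj', hj, hj', h.sum_row] at hle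
  norm_num at hle

theorem transpose_mul_self [DecidableEq κ] (h : IsBalancedIncidence Z d) : Zᵀ * Z = d • 1 := by
  ext j j'
  rw [mul_apply, smul_apply, smul_eq_mul]
  rcases eq_or_ne j j' with rfl | hjj'
  · rw [one_apply_eq, mul_one, ← h.sum_col j]
    refine sum_congr rfl fun k _ => ?_
    rcases h.zero_or_one k j with hk | hk <;> simp [hk]
  · simp [h.mul_eq_zero_of_ne _ hjj', hjj']

theorem transpose_mul_apply_nonneg {κ' : Type*} [Fintype κ'] {Z' : Matrix ι κ' ℝ} {d' : ℝ}
    (h : IsBalancedIncidence Z d) (h' : IsBalancedIncidence Z' d') (j : κ) (j' : κ') :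
    0 ≤ (Zᵀ * Z') j j' :=
  sum_nonneg fun k _ => mul_nonneg (h.nonneg k j) (h'.nonneg k j')

theorem sum_row_transpose_mul {μ : Type*} [Fintype μ] {Y : Matrix ι μ ℝ}
    (h : IsBalancedIncidence Z d) (hY : ∀ k, ∑ j, Y k j = 1) (i : κ) :
    ∑ j, (Zᵀ * Y) i j = d := by
  simp_rw [mul_apply, transpose_apply]
  rw [sum_comm]
  simp [← mul_sum, hY, h.sum_col]

theorem sum_col_transpose_mul {μ : Type*} [Fintype μ] {Y : Matrix ι μ ℝ}
    (h : IsBalancedIncidence Z d) (hY : ∀ k, ∑ j, Y k j = 1) (j : κ) :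
    ∑ i, (Yᵀ * Z) i j = d := by
  rw [← h.sum_row_transpose_mul hY j, ← transpose_transpose (Yᵀ * Z), transpose_mul,
    transpose_transpose]
  rfl

theorem gram_fromCols {κ' : Type*} [Fintype κ'] [DecidableEq ι] [DecidableEq κ] [DecidableEq κ']
    {Z' : Matrix ι κ' ℝ} (h : IsBalancedIncidence Z d) (h' : IsBalancedIncidence Z' d) (c : ℝ) :
    (fromCols Z Z')ᵀ * (c • 1 : Matrix ι ι ℝ) * fromCols Z Z' =
      fromBlocks ((c * d) • 1) (c • (Zᵀ * Z')) (c • (Zᵀ * Z'))ᵀ ((c * d) • 1) := by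
  rw [Matrix.mul_smul, Matrix.mul_one, Matrix.smul_mul, transpose_fromCols, fromRows_mul_fromCols,
    h.transpose_mul_self, h'.transpose_mul_self, transpose_smul, transpose_mul, transpose_transpose,
    fromBlocks_smul, smul_smul, smul_smul]

end IsBalancedIncidence

theorem dotProduct_mulVec_self_le {m n : Type*} [Fintype m] [Fintype n] {A : Matrix m n ℝ}
    {r c : ℝ} (hA : ∀ i j, 0 ≤ A i j) (hrow : ∀ i, ∑ j, A i j = r)
    (hcol : ∀ j, ∑ i, A i j = c) (v : n → ℝ) :
    (A *ᵥ v) ⬝ᵥ (A *ᵥ v) ≤ r * c * (v ⬝ᵥ v) := by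
  have hCS : ∀ i, (A *ᵥ v) i * (A *ᵥ v) i ≤ r * ∑ j, A i j * (v j * v j) := fun i => by
    rw [← hrow i, ← sq]
    exact sum_sq_le_sum_mul_sum_of_sq_le_mul _ (fun j _ => hA i j)
      (fun j _ => mul_nonneg (hA i j) (mul_self_nonneg _)) fun j _ => le_of_eq (by ring)
  calc (A *ᵥ v) ⬝ᵥ (A *ᵥ v) ≤ ∑ i, r * ∑ j, A i j * (v j * v j) := sum_le_sum fun i _ => hCS i
    _ = r * c * (v ⬝ᵥ v) := by
      simp_rw [← mul_sum, dotProduct]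
      rw [sum_comm]
      simp_rw [← sum_mul, hcol, mul_sum, mul_assoc]

theorem IsHermitian.inf'_eigenvalues_eq_of_le_of_mulVec_eq {n : Type*} [Fintype n]
    [DecidableEq n] [Nonempty n] {H : Matrix n n ℝ} (hH : H.IsHermitian) {t : ℝ}
    (hle : ∀ v, t * (v ⬝ᵥ v) ≤ v ⬝ᵥ (H *ᵥ v)) {u : n → ℝ} (hu : u ≠ 0) (hHu : H *ᵥ u = t • u) :
    univ.inf' univ_nonempty hH.eigenvalues = t := by
  refine le_antisymm ?_ (le_inf' _ _ fun i _ => ?_)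
  · have ht : t ∈ spectrum ℝ H := by
      rw [← spectrum_toLin']
      exact (Module.End.hasEigenvalue_of_hasEigenvector
        ⟨Module.End.mem_eigenspace_iff.mpr hHu, hu⟩).mem_spectrum
    obtain ⟨i, rfl⟩ := hH.spectrum_real_eq_range_eigenvalues ▸ ht
    exact inf'_le _ (mem_univ i)
  · have hv : ⇑(hH.eigenvectorBasis i) ⬝ᵥ ⇑(hH.eigenvectorBasis i) = 1 := by
      have h := real_inner_self_eq_norm_sq (hH.eigenvectorBasis i)
      rw [hH.eigenvectorBasis.orthonormal.1 i, EuclideanSpace.inner_eq_star_dotProduct] at h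
      simpa using h
    simpa [hv, hH.eigenvalues_eq i] using hle (hH.eigenvectorBasis i)

/-- `D^{1/2} (L + D)⁻¹ M (L + D)⁻ᵀ D^{1/2}`, with `D` the diagonal of `M` and `L` (in the intended
use) its strictly lower triangular part. -/
noncomputable def ssorPrecond {ι : Type*} [Fintype ι] [DecidableEq ι] (M L : Matrix ι ι ℝ) :
    Matrix ι ι ℝ :=
  diagonal (fun i => √(M i i)) * (L + diagonal fun i => M i i)⁻¹ * M *
    (L + diagonal fun i => M i i)⁻¹ᵀ * diagonal fun i => √(M i i)

section Blocks

variable {m₁ m₂ : Type*} [Fintype m₁] [Fintype m₂] [DecidableEq m₁] [DecidableEq m₂]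
  (A : Matrix m₁ m₂ ℝ) {c₁ c₂ e γ : ℝ}

theorem fromBlocks_eq_lower_mul_diag_mul_transpose (h₁ : c₁ ≠ 0) (h₂ : c₂ ≠ 0) :
    fromBlocks (c₁ • 1) A Aᵀ (c₂ • 1) =
      fromBlocks (c₁ • 1) 0 Aᵀ (c₂ • 1) *
        fromBlocks (c₁⁻¹ • 1) 0 0 (c₂⁻¹ • (1 - (c₁ * c₂)⁻¹ • (Aᵀ * A))) *
          (fromBlocks (c₁ • 1) 0 Aᵀ (c₂ • 1))ᵀ := by
  simp only [fromBlocks_transpose, fromBlocks_multiply, transpose_zero, transpose_transpose,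
    transpose_smul, transpose_one]
  congr 1 <;> simp [smul_smul, h₁, h₂, smul_sub]

theorem isUnit_det_fromBlocks_lower (h₁ : c₁ ≠ 0) (h₂ : c₂ ≠ 0) :
    IsUnit (fromBlocks (c₁ • 1) 0 Aᵀ (c₂ • 1)).det := by
  simp [det_fromBlocks_zero₁₂, h₁, h₂]

theorem ssorPrecond_fromBlocks (h₁ : 0 < c₁) (h₂ : 0 < c₂) :
    ssorPrecond (fromBlocks (c₁ • 1) A Aᵀ (c₂ • 1)) (fromBlocks 0 0 Aᵀ 0) =
      fromBlocks 1 0 0 (1 - (c₁ * c₂)⁻¹ • (Aᵀ * A)) := by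
  have hD : ∀ i, fromBlocks (c₁ • 1) A Aᵀ (c₂ • 1) i i = Sum.elim (fun _ => c₁) (fun _ => c₂) i
    | .inl i | .inr i => by simp
  have hT : fromBlocks 0 0 Aᵀ 0 + diagonal (Sum.elim (fun _ => c₁) fun _ => c₂) =
      fromBlocks (c₁ • 1) 0 Aᵀ (c₂ • 1) := by
    simp [← fromBlocks_diagonal, fromBlocks_add, smul_one_eq_diagonal]
  have hS : diagonal (fun i => √(Sum.elim (fun _ : m₁ => c₁) (fun _ : m₂ => c₂) i)) =
      fromBlocks (√c₁ • 1) 0 0 (√c₂ • 1) := by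
    rw [smul_one_eq_diagonal, smul_one_eq_diagonal, fromBlocks_diagonal]
    congr 1
    funext i
    rcases i with i | i <;> rfl
  have hdet := isUnit_det_fromBlocks_lower A h₁.ne' h₂.ne'
  simp only [ssorPrecond, hD]
  rw [hT, hS, fromBlocks_eq_lower_mul_diag_mul_transpose A h₁.ne' h₂.ne', transpose_nonsing_inv]
  simp only [Matrix.mul_assoc]
  rw [nonsing_inv_mul_cancel_left _ _ hdet,
    mul_nonsing_inv_cancel_left _ _ (by rwa [det_transpose])]
  have hs₁ : √c₁ * c₁⁻¹ * √c₁ = 1 := by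
    rw [mul_right_comm, Real.mul_self_sqrt h₁.le, mul_inv_cancel₀ h₁.ne']
  have hs₂ : √c₂ * c₂⁻¹ * √c₂ = 1 := by
    rw [mul_right_comm, Real.mul_self_sqrt h₂.le, mul_inv_cancel₀ h₂.ne']
  simp [fromBlocks_multiply, smul_smul, hs₁, hs₂]

theorem le_dotProduct_fromBlocks_one_sub_mulVec (hA : ∀ i j, 0 ≤ A i j)
    (hrow : ∀ i, ∑ j, A i j = e) (hcol : ∀ j, ∑ i, A i j = e) (hγ : 0 ≤ γ)
    (v : m₁ ⊕ m₂ → ℝ) :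
    (1 - γ * e ^ 2) * (v ⬝ᵥ v) ≤ v ⬝ᵥ (fromBlocks 1 0 0 (1 - γ • (Aᵀ * A)) *ᵥ v) := by
  obtain ⟨x, y, rfl⟩ : ∃ x y, v = Sum.elim x y := ⟨_, _, (Sum.elim_comp_inl_inr v).symm⟩
  have hgram : y ⬝ᵥ ((Aᵀ * A) *ᵥ y) = (A *ᵥ y) ⬝ᵥ (A *ᵥ y) := by
    rw [← mulVec_mulVec, dotProduct_mulVec, vecMul_transpose]
  have hschur := dotProduct_mulVec_self_le hA hrow hcol y
  have hx : 0 ≤ x ⬝ᵥ x := by simpa using dotProduct_self_star_nonneg x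
  simp only [fromBlocks_mulVec, one_mulVec, zero_mulVec, add_zero, zero_add,
    sumElim_dotProduct_sumElim, Sum.elim_comp_inl, Sum.elim_comp_inr, sub_mulVec, smul_mulVec,
    dotProduct_sub, dotProduct_smul, smul_eq_mul, hgram]
  nlinarith [mul_le_mul_of_nonneg_left hschur hγ, mul_nonneg (mul_nonneg hγ (sq_nonneg e)) hx]

theorem fromBlocks_one_sub_mulVec_elim_zero_one (hrow : ∀ i, ∑ j, A i j = e)
    (hcol : ∀ j, ∑ i, A i j = e) :
    (fromBlocks 1 0 0 (1 - γ • (Aᵀ * A)) : Matrix (m₁ ⊕ m₂) (m₁ ⊕ m₂) ℝ) *ᵥ Sum.elim 0 1 =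
      (1 - γ * e ^ 2) • (Sum.elim 0 1 : m₁ ⊕ m₂ → ℝ) := by
  have hA1 : A *ᵥ 1 = e • 1 := by
    ext i; simp [mulVec, dotProduct, hrow]
  have hAt1 : Aᵀ *ᵥ 1 = e • 1 := by
    ext j; simp [mulVec, dotProduct, hcol]
  have hgram1 : (Aᵀ * A) *ᵥ 1 = e ^ 2 • 1 := by
    rw [← mulVec_mulVec, hA1, mulVec_smul, hAt1, smul_smul, sq]
  ext (i | j) <;> simp [fromBlocks_mulVec, sub_mulVec, smul_mulVec, hgram1]

theorem inf'_eigenvalues_of_eq_fromBlocks_one_sub [Nonempty m₂]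
    {H : Matrix (m₁ ⊕ m₂) (m₁ ⊕ m₂) ℝ} (hH : H.IsHermitian)
    (hHA : H = fromBlocks 1 0 0 (1 - γ • (Aᵀ * A))) (hA : ∀ i j, 0 ≤ A i j)
    (hrow : ∀ i, ∑ j, A i j = e) (hcol : ∀ j, ∑ i, A i j = e) (hγ : 0 ≤ γ) :
    univ.inf' univ_nonempty hH.eigenvalues = 1 - γ * e ^ 2 := by
  subst hHA
  have hu : (Sum.elim 0 1 : m₁ ⊕ m₂ → ℝ) ≠ 0 := fun h => by
    simpa using congrFun h (.inr (Classical.arbitrary m₂))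
  exact hH.inf'_eigenvalues_eq_of_le_of_mulVec_eq
    (le_dotProduct_fromBlocks_one_sub_mulVec A hA hrow hcol hγ) hu
    (fromBlocks_one_sub_mulVec_elim_zero_one A hrow hcol)

end Blocks

end Matrix

theorem stmt6_general {n m1 m2 : ℕ} [NeZero m2] (d : ℕ) (hd : 0 < d)
    (σsq σ1sq σ2sq : ℝ) (hσ : 0 < σsq) (hσ1 : 0 < σ1sq) (hσ2 : 0 < σ2sq)
    (Z1 : Matrix (Fin n) (Fin m1) ℝ) (Z2 : Matrix (Fin n) (Fin m2) ℝ)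
    -- binary incidence matrices
    (hZ1bin : ∀ k j, Z1 k j = 0 ∨ Z1 k j = 1)
    (hZ2bin : ∀ k j, Z2 k j = 0 ∨ Z2 k j = 1)
    -- each observation belongs to exactly one level of each grouping
    (hZ1row : ∀ k, ∑ j, Z1 k j = 1) (hZ2row : ∀ k, ∑ j, Z2 k j = 1)
    -- balanced design: every level occurs exactly `d` times
    (hZ1col : ∀ j, ∑ k, Z1 k j = (d : ℝ)) (hZ2col : ∀ j, ∑ k, Z2 k j = (d : ℝ))
    (w : Fin n → ℝ) (hw : ∀ k, w k = σsq⁻¹)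
    (sinv : Fin m1 ⊕ Fin m2 → ℝ)
    (hsinv : sinv = Sum.elim (fun _ => σ1sq⁻¹) (fun _ => σ2sq⁻¹))
    (M : Matrix (Fin m1 ⊕ Fin m2) (Fin m1 ⊕ Fin m2) ℝ)
    (hM : M = Matrix.diagonal sinv
        + (fromCols Z1 Z2)ᵀ * Matrix.diagonal w * fromCols Z1 Z2)
    (dg : Fin m1 ⊕ Fin m2 → ℝ) (hdg : ∀ i, dg i = M i i)
    (L : Matrix (Fin m1 ⊕ Fin m2) (Fin m1 ⊕ Fin m2) ℝ)
    (hL : L = fromBlocks 0 0 (Z2ᵀ * Matrix.diagonal w * Z1) 0)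
    (Mp : Matrix (Fin m1 ⊕ Fin m2) (Fin m1 ⊕ Fin m2) ℝ)
    (hMp : Mp = Matrix.diagonal (fun i => Real.sqrt (dg i)) * (L + Matrix.diagonal dg)⁻¹
        * M * ((L + Matrix.diagonal dg)⁻¹)ᵀ * Matrix.diagonal (fun i => Real.sqrt (dg i)))
    (hHerm : Mp.IsHermitian) :
    Finset.univ.inf' Finset.univ_nonempty hHerm.eigenvalues
      = 1 - (1 / (σsq / (σ1sq * d) + 1)) * (1 / (σsq / (σ2sq * d) + 1)) := by
  have hW : diagonal w = σsq⁻¹ • 1 := by rw [funext hw, smul_one_eq_diagonal]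
  have h₁ : IsBalancedIncidence Z1 d := ⟨hZ1bin, hZ1row, hZ1col⟩
  have h₂ : IsBalancedIncidence Z2 d := ⟨hZ2bin, hZ2row, hZ2col⟩
  set e : ℝ := σsq⁻¹ * d
  set A := σsq⁻¹ • (Z1ᵀ * Z2)
  have hM' : M = fromBlocks ((σ1sq⁻¹ + e) • 1) A Aᵀ ((σ2sq⁻¹ + e) • 1) := by
    rw [hM, hsinv, hW, h₁.gram_fromCols h₂, ← fromBlocks_diagonal, fromBlocks_add,
      ← smul_one_eq_diagonal, ← smul_one_eq_diagonal]
    simp [A, e, add_smul]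
  have hL' : L = fromBlocks 0 0 Aᵀ 0 := by
    simp [hL, hW, A, transpose_mul]
  obtain rfl : dg = fun i => M i i := funext hdg
  subst hM' hL'
  have hMp' := hMp.trans (ssorPrecond_fromBlocks A (by positivity) (by positivity))
  rw [inf'_eigenvalues_of_eq_fromBlocks_one_sub A (e := e) hHerm hMp'
    (fun i j => mul_nonneg (by positivity) (h₁.transpose_mul_apply_nonneg h₂ i j))
    (fun i => by simp [A, e, ← mul_sum, h₁.sum_row_transpose_mul h₂.sum_row])
    (fun j => by simp [A, e, ← mul_sum, h₂.sum_col_transpose_mul h₁.sum_row]) (by positivity)]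
  simp only [e]
  field_simp

/-- For `K = 2`, a Gaussian likelihood (`W = σ⁻² Iₙ`,
`Σ = diag(σ1² I_{m1}, σ2² I_{m2})`), and a balanced design in which every random effect
realization occurs exactly `d` times in each grouping, the smallest eigenvalue of the
SSOR-preconditioned matrix equals exactly
`1 − (1/(σ²/(σ1² d) + 1))·(1/(σ²/(σ2² d) + 1))`. -/
theorem stmt6 {n m1 m2 : ℕ} [NeZero m1] [NeZero m2] (d : ℕ) (hd : 0 < d)
    (σsq σ1sq σ2sq : ℝ) (hσ : 0 < σsq) (hσ1 : 0 < σ1sq) (hσ2 : 0 < σ2sq)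
    (Z1 : Matrix (Fin n) (Fin m1) ℝ) (Z2 : Matrix (Fin n) (Fin m2) ℝ)
    -- binary incidence matrices
    (hZ1bin : ∀ k j, Z1 k j = 0 ∨ Z1 k j = 1)
    (hZ2bin : ∀ k j, Z2 k j = 0 ∨ Z2 k j = 1)
    -- each observation belongs to exactly one level of each grouping
    (hZ1row : ∀ k, ∑ j, Z1 k j = 1) (hZ2row : ∀ k, ∑ j, Z2 k j = 1)
    -- balanced design: every level occurs exactly `d` times
    (hZ1col : ∀ j, ∑ k, Z1 k j = (d : ℝ)) (hZ2col : ∀ j, ∑ k, Z2 k j = (d : ℝ))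
    (w : Fin n → ℝ) (hw : ∀ k, w k = σsq⁻¹)
    (sinv : Fin m1 ⊕ Fin m2 → ℝ)
    (hsinv : sinv = Sum.elim (fun _ => σ1sq⁻¹) (fun _ => σ2sq⁻¹))
    (M : Matrix (Fin m1 ⊕ Fin m2) (Fin m1 ⊕ Fin m2) ℝ)
    (hM : M = Matrix.diagonal sinv
        + (fromCols Z1 Z2)ᵀ * Matrix.diagonal w * fromCols Z1 Z2)
    (dg : Fin m1 ⊕ Fin m2 → ℝ) (hdg : ∀ i, dg i = M i i)
    (L : Matrix (Fin m1 ⊕ Fin m2) (Fin m1 ⊕ Fin m2) ℝ)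
    (hL : L = fromBlocks 0 0 (Z2ᵀ * Matrix.diagonal w * Z1) 0)
    (Mp : Matrix (Fin m1 ⊕ Fin m2) (Fin m1 ⊕ Fin m2) ℝ)
    (hMp : Mp = Matrix.diagonal (fun i => Real.sqrt (dg i)) * (L + Matrix.diagonal dg)⁻¹
        * M * ((L + Matrix.diagonal dg)⁻¹)ᵀ * Matrix.diagonal (fun i => Real.sqrt (dg i)))
    (hHerm : Mp.IsHermitian) :
    Finset.univ.inf' Finset.univ_nonempty hHerm.eigenvalues
      = 1 - (1 / (σsq / (σ1sq * d) + 1)) * (1 / (σsq / (σ2sq * d) + 1)) :=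
  stmt6_general d hd σsq σ1sq σ2sq hσ hσ1 hσ2 Z1 Z2 hZ1bin hZ2bin hZ1row hZ2row hZ1col hZ2col w hw
    sinv hsinv M hM dg hdg L hL Mp hMp hHerm
end

section
/- For the diagonal preconditioner P = D = diag((Σ^{-1}+Z^T W Z)_{ii}) with K grouped random effects, the K−1 smallest eigenvalues λ_{m+1−k}, k = 1,…,K−1, of the preconditioned matrix D^{-1/2}(Σ^{-1}+Z^T W Z)D^{-1/2} satisfy 1/max_i(Σ_{ii} D_{ii}) ≤ λ_{m+1−k} ≤ 1/min_i(Σ_{ii} D_{ii}). -/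
/-!
Write `Mp = D^{-1/2} Σ⁻¹ D^{-1/2} + D^{-1/2} Zᵀ W Z D^{-1/2}`. The first summand is diagonal with
entries `1 / (Σᵢᵢ Dᵢᵢ)` and the second is positive semidefinite, which gives the lower bound for
every eigenvalue. Since each row of each block `Z_k` sums to one, `Z` kills the vectors that are
constant on every block with block values summing to zero; rescaled by `D^{1/2}` they form a
subspace of dimension at least `K - 1` on which the quadratic form of `Mp` is that of its
diagonal part. A subspace of dimension `> t` on which the Rayleigh quotient is `≤ c` forces the
`t`-th smallest eigenvalue (counting from `0`) to be `≤ c`, the easy half of Courant–Fischer.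
-/

open Matrix Finset

namespace Matrix.IsHermitian

variable {ι : Type*} [Fintype ι] [DecidableEq ι] {A : Matrix ι ι ℝ} (hA : A.IsHermitian)

lemma dotProduct_mulVec_eigenvectorBasis (i : ι) (x : ι → ℝ) :
    ⇑(hA.eigenvectorBasis i) ⬝ᵥ A *ᵥ x = hA.eigenvalues i * (⇑(hA.eigenvectorBasis i) ⬝ᵥ x) := by
  have hAt : Aᵀ = A := by simpa [conjTranspose_eq_transpose_of_trivial] using hA.eq
  rw [dotProduct_mulVec, ← mulVec_transpose, hAt, mulVec_eigenvectorBasis, smul_dotProduct,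
    smul_eq_mul]

lemma dotProduct_mulVec_eq_sum (x : ι → ℝ) :
    x ⬝ᵥ A *ᵥ x = ∑ i, hA.eigenvalues i * (⇑(hA.eigenvectorBasis i) ⬝ᵥ x) ^ 2 := by
  have := hA.eigenvectorBasis.sum_inner_mul_inner (WithLp.toLp 2 x) (WithLp.toLp 2 (A *ᵥ x))
  simp only [EuclideanSpace.inner_eq_star_dotProduct, star_trivial] at this
  rw [dotProduct_comm, ← this]
  refine Finset.sum_congr rfl fun i _ => ?_
  rw [dotProduct_comm (A *ᵥ x), hA.dotProduct_mulVec_eigenvectorBasis]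
  ring

lemma dotProduct_self_eq_sum_sq (x : ι → ℝ) :
    x ⬝ᵥ x = ∑ i, (⇑(hA.eigenvectorBasis i) ⬝ᵥ x) ^ 2 := by
  have := hA.eigenvectorBasis.sum_inner_mul_inner (WithLp.toLp 2 x) (WithLp.toLp 2 x)
  simp only [EuclideanSpace.inner_eq_star_dotProduct, star_trivial] at this
  simpa [sq, dotProduct_comm] using this.symm

lemma le_eigenvalues_of_forall_le {c : ℝ} (h : ∀ x, c * (x ⬝ᵥ x) ≤ x ⬝ᵥ A *ᵥ x) (i : ι) :
    c ≤ hA.eigenvalues i := by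
  have hunit : ⇑(hA.eigenvectorBasis i) ⬝ᵥ ⇑(hA.eigenvectorBasis i) = 1 := by
    have := hA.eigenvectorBasis.inner_eq_one i
    rwa [EuclideanSpace.inner_eq_star_dotProduct, star_trivial] at this
  simpa [hA.dotProduct_mulVec_eigenvectorBasis, hunit] using h (hA.eigenvectorBasis i)

lemma eigenvalues_le_of_lt_finrank (e : Fin (Fintype.card ι) ≃ ι)
    (hmono : Monotone fun t => hA.eigenvalues (e t)) {V : Submodule ℝ (ι → ℝ)}
    {t : Fin (Fintype.card ι)} (ht : (t : ℕ) < Module.finrank ℝ V) {c : ℝ}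
    (hV : ∀ x ∈ V, x ⬝ᵥ A *ᵥ x ≤ c * (x ⬝ᵥ x)) : hA.eigenvalues (e t) ≤ c := by
  -- `ker P` is the span of the eigenvectors `e u` with `t ≤ u`.
  set P : Matrix (Fin t) ι ℝ := fun u => ⇑(hA.eigenvectorBasis (e (Fin.castLE t.isLt.le u)))
  have hW : Fintype.card ι ≤ t + Module.finrank ℝ (LinearMap.ker P.mulVecLin) := by
    have := LinearMap.finrank_range_add_finrank_ker P.mulVecLin
    have := (LinearMap.range P.mulVecLin).finrank_le
    simp only [Module.finrank_fintype_fun_eq_card, Fintype.card_fin] at *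
    omega
  obtain ⟨x, hxV, hxW, hx0⟩ : ∃ x ∈ V, x ∈ LinearMap.ker P.mulVecLin ∧ x ≠ 0 := by
    by_contra! h
    have := Submodule.finrank_add_finrank_le_of_disjoint (Submodule.disjoint_def.2 h)
    rw [Module.finrank_fintype_fun_eq_card] at this
    omega
  have hlow : hA.eigenvalues (e t) * (x ⬝ᵥ x) ≤ x ⬝ᵥ A *ᵥ x := by
    rw [hA.dotProduct_self_eq_sum_sq, hA.dotProduct_mulVec_eq_sum, mul_sum,
      ← e.sum_comp, ← e.sum_comp]
    refine Finset.sum_le_sum fun u _ => ?_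
    rcases lt_or_ge u t with hut | htu
    · have : ⇑(hA.eigenvectorBasis (e u)) ⬝ᵥ x = 0 := congrFun hxW ⟨u, hut⟩
      simp [this]
    · exact mul_le_mul_of_nonneg_right (hmono htu) (sq_nonneg _)
  have hpos : 0 < x ⬝ᵥ x := by simpa using dotProduct_self_star_pos_iff.2 hx0
  exact le_of_mul_le_mul_right (hlow.trans (hV x hxV)) hpos

end Matrix.IsHermitian

section Gram

variable {R n ι : Type*} [CommRing R] [Fintype n] [Fintype ι] [DecidableEq n] [DecidableEq ι]

lemma dotProduct_diagonal_mul_mulVec_diagonal (d x : ι → R) (N : Matrix ι ι R) :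
    x ⬝ᵥ (diagonal d * N * diagonal d) *ᵥ x = (diagonal d *ᵥ x) ⬝ᵥ N *ᵥ (diagonal d *ᵥ x) := by
  rw [← mulVec_mulVec, ← mulVec_mulVec]
  simp only [dotProduct, mulVec_diagonal]
  exact Finset.sum_congr rfl fun _ _ => by ring

lemma dotProduct_mulVec_diagonal_add_gram (σ : ι → R) (w : n → R) (Z : Matrix n ι R)
    (y : ι → R) :
    y ⬝ᵥ (diagonal σ + Zᵀ * diagonal w * Z) *ᵥ y
      = ∑ i, σ i * y i ^ 2 + ∑ l, w l * (Z *ᵥ y) l ^ 2 := by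
  rw [add_mulVec, dotProduct_add, ← mulVec_mulVec, ← mulVec_mulVec, dotProduct_mulVec y Zᵀ,
    vecMul_transpose]
  simp only [dotProduct, mulVec_diagonal]
  congr 1 <;> exact Finset.sum_congr rfl fun _ _ => by ring

end Gram

section Jacobi

variable {n ι : Type*} [Fintype n] [Fintype ι] [DecidableEq n] [DecidableEq ι]

lemma diagonal_add_gram_apply_self_pos {σ : ι → ℝ} {w : n → ℝ} (Z : Matrix n ι ℝ) {i : ι}
    (hσ : 0 < σ i) (hw : ∀ l, 0 ≤ w l) : 0 < (diagonal σ + Zᵀ * diagonal w * Z) i i := by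
  have := dotProduct_mulVec_diagonal_add_gram σ w Z (Pi.single i 1)
  rw [single_dotProduct, mulVec_single_one, one_mul, col_apply] at this
  rw [this]
  refine add_pos_of_pos_of_nonneg ?_ (sum_nonneg fun l _ => mul_nonneg (hw l) (sq_nonneg _))
  simpa [Pi.single_apply] using hσ

lemma dotProduct_jacobiPrecond_mulVec {s : ι → ℝ} {w : n → ℝ} {Z : Matrix n ι ℝ}
    {M : Matrix ι ι ℝ} (hM : M = diagonal (fun i => (s i)⁻¹) + Zᵀ * diagonal w * Z)
    (hMpos : ∀ i, 0 ≤ M i i) (x : ι → ℝ) :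
    x ⬝ᵥ (diagonal (fun i => (√(M i i))⁻¹) * M * diagonal (fun i => (√(M i i))⁻¹)) *ᵥ x
      = ∑ i, (s i * M i i)⁻¹ * x i ^ 2
        + ∑ l, w l * (Z *ᵥ diagonal (fun i => (√(M i i))⁻¹) *ᵥ x) l ^ 2 := by
  have := dotProduct_mulVec_diagonal_add_gram (fun i => (s i)⁻¹) w Z
    (diagonal (fun i => (√(M i i))⁻¹) *ᵥ x)
  rw [← hM] at this
  rw [dotProduct_diagonal_mul_mulVec_diagonal, this]
  congr 1
  refine sum_congr rfl fun i _ => ?_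
  rw [mulVec_diagonal, mul_pow, inv_pow, Real.sq_sqrt (hMpos i), mul_inv]
  ring

end Jacobi

lemma sub_one_le_finrank_ker_mulVecLin {R n κ : Type*} [Field R] [Fintype n] [Nonempty n]
    [Fintype κ] {β : κ → Type*} [∀ k, Fintype (β k)] (Z : Matrix n (Σ k, β k) R)
    (hZ : ∀ l k, ∑ j, Z l ⟨k, j⟩ = 1) :
    Fintype.card κ - 1 ≤ Module.finrank R (LinearMap.ker Z.mulVecLin) := by
  set f : (κ → R) →ₗ[R] (Σ k, β k) → R := LinearMap.funLeft R R Sigma.fst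
  have hf : Function.Injective f := by
    refine LinearMap.funLeft_injective_of_surjective _ _ _ fun k => ?_
    obtain ⟨j, -, -⟩ := Finset.exists_ne_zero_of_sum_ne_zero
      ((hZ (Classical.arbitrary n) k).trans_ne one_ne_zero)
    exact ⟨⟨k, j⟩, rfl⟩
  have hZf : ∀ a, Z *ᵥ f a = (∑ k, a k) • fun _ => 1 := by
    intro a
    ext l
    simp [f, mulVec, dotProduct, Fintype.sum_sigma, ← Finset.sum_mul, hZ]
  set g := Z.mulVecLin ∘ₗ f
  have hrange : Module.finrank R (LinearMap.range g) ≤ 1 := by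
    refine (Submodule.finrank_mono ?_).trans
      ((finrank_span_le_card ({fun _ => 1} : Set (n → R))).trans (by simp))
    rintro _ ⟨a, rfl⟩
    change Z *ᵥ f a ∈ _
    rw [hZf]
    exact Submodule.smul_mem _ _ (Submodule.mem_span_singleton_self _)
  have hmap : (LinearMap.ker g).map f ≤ LinearMap.ker Z.mulVecLin := by
    rintro _ ⟨a, ha, rfl⟩
    exact ha
  have := LinearMap.finrank_range_add_finrank_ker g
  have := Submodule.finrank_mono hmap
  rw [(Submodule.equivMapOfInjective f hf _).finrank_eq.symm] at this
  rw [Module.finrank_fintype_fun_eq_card] at *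
  omega

section DiagonalRayleigh

variable {ι : Type*} [Fintype ι] {η : ι → ℝ}

lemma inv_sup'_mul_dotProduct_self_le (hne : (univ : Finset ι).Nonempty) (hη : ∀ i, 0 < η i)
    (x : ι → ℝ) :
    (univ.sup' hne η)⁻¹ * (x ⬝ᵥ x) ≤ ∑ i, (η i)⁻¹ * x i ^ 2 := by
  rw [dotProduct, mul_sum]
  exact sum_le_sum fun i _ => by
    rw [← sq]
    exact mul_le_mul_of_nonneg_right (inv_anti₀ (hη i) (le_sup' _ (mem_univ i))) (sq_nonneg _)

lemma sum_inv_mul_sq_le_inv_inf'_mul_dotProduct_self (hne : (univ : Finset ι).Nonempty)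
    (hη : ∀ i, 0 < η i) (x : ι → ℝ) :
    ∑ i, (η i)⁻¹ * x i ^ 2 ≤ (univ.inf' hne η)⁻¹ * (x ⬝ᵥ x) := by
  obtain ⟨i₀, -, hi₀⟩ := exists_mem_eq_inf' hne η
  rw [dotProduct, mul_sum]
  exact sum_le_sum fun i _ => by
    rw [← sq]
    exact mul_le_mul_of_nonneg_right (inv_anti₀ (hi₀ ▸ hη i₀) (inf'_le _ (mem_univ i)))
      (sq_nonneg _)

end DiagonalRayleigh

theorem stmt7_general {n K : ℕ} {m : Fin K → ℕ}
    (hne : (Finset.univ : Finset ((k : Fin K) × Fin (m k))).Nonempty)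
    (w : Fin n → ℝ) (hw : ∀ l, 0 < w l)
    (s : (k : Fin K) × Fin (m k) → ℝ) (hs : ∀ i, 0 < s i)
    (Z : Matrix (Fin n) ((k : Fin K) × Fin (m k)) ℝ)
    (hZrow : ∀ l (k : Fin K), ∑ j : Fin (m k), Z l ⟨k, j⟩ = 1)
    (M : Matrix ((k : Fin K) × Fin (m k)) ((k : Fin K) × Fin (m k)) ℝ)
    (hM : M = Matrix.diagonal (fun i => (s i)⁻¹) + Zᵀ * Matrix.diagonal w * Z)
    (Mp : Matrix ((k : Fin K) × Fin (m k)) ((k : Fin K) × Fin (m k)) ℝ)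
    (hMp : Mp = Matrix.diagonal (fun i => (Real.sqrt (M i i))⁻¹) * M
        * Matrix.diagonal (fun i => (Real.sqrt (M i i))⁻¹))
    (hHerm : Mp.IsHermitian) :
    ∀ e : Fin (Fintype.card ((k : Fin K) × Fin (m k))) ≃ ((k : Fin K) × Fin (m k)),
      Monotone (fun t => hHerm.eigenvalues (e t)) →
      ∀ t : Fin (Fintype.card ((k : Fin K) × Fin (m k))), (t : ℕ) < K - 1 →
        (Finset.univ.sup' hne fun i => s i * M i i)⁻¹ ≤ hHerm.eigenvalues (e t)
        ∧ hHerm.eigenvalues (e t) ≤ (Finset.univ.inf' hne fun i => s i * M i i)⁻¹ := by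
  intro e hmono t ht
  have hMpos : ∀ i, 0 < M i i := fun i =>
    hM ▸ diagonal_add_gram_apply_self_pos Z (inv_pos.2 (hs i)) fun l => (hw l).le
  have hη : ∀ i, 0 < s i * M i i := fun i => mul_pos (hs i) (hMpos i)
  have hquad := dotProduct_jacobiPrecond_mulVec hM fun i => (hMpos i).le
  rw [← hMp] at hquad
  have hker : (t : ℕ) < Module.finrank ℝ (LinearMap.ker Z.mulVecLin) := by
    rcases isEmpty_or_nonempty (Fin n) with hn | hn
    · rw [LinearMap.ker_eq_top.2 (Subsingleton.elim _ _), finrank_top,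
        Module.finrank_fintype_fun_eq_card]
      exact t.isLt
    · exact ht.trans_le (by simpa using sub_one_le_finrank_ker_mulVecLin Z hZrow)
  have hsurj : Function.Surjective (diagonal fun i => (√(M i i))⁻¹).mulVecLin :=
    mulVec_surjective_iff_isUnit.2 <| isUnit_diagonal.2 <| Pi.isUnit_iff.2 fun i =>
      (inv_pos.2 (Real.sqrt_pos.2 (hMpos i))).ne'.isUnit
  refine ⟨hHerm.le_eigenvalues_of_forall_le (fun x => ?_) _,
    hHerm.eigenvalues_le_of_lt_finrank e hmono
      (V := (LinearMap.ker Z.mulVecLin).comap (diagonal fun i => (√(M i i))⁻¹).mulVecLin) ?_ ?_⟩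
  · rw [hquad]
    exact (inv_sup'_mul_dotProduct_self_le hne hη x).trans
      (le_add_of_nonneg_right (sum_nonneg fun l _ => mul_nonneg (hw l).le (sq_nonneg _)))
  · rw [← Submodule.map_comap_eq_of_surjective hsurj (LinearMap.ker Z.mulVecLin)] at hker
    exact hker.trans_le (Submodule.finrank_map_le _ _)
  · intro x hx
    have hZx : Z *ᵥ (diagonal fun i => (√(M i i))⁻¹) *ᵥ x = 0 := hx
    rw [hquad, hZx]
    simpa using sum_inv_mul_sq_le_inv_inf'_mul_dotProduct_self hne hη x

/-- For the diagonal preconditioner `P = D = diag((Σ⁻¹+ZᵀWZ)_{ii})`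
with `K` grouped random effects, the `K−1` smallest eigenvalues of the preconditioned
matrix `D^{-1/2}(Σ⁻¹+ZᵀWZ)D^{-1/2}` lie in `[1/max_i(Σ_{ii}D_{ii}), 1/min_i(Σ_{ii}D_{ii})]`:
in any increasing enumeration of the eigenvalues (with multiplicity), the first `K−1`
satisfy these bounds. -/
theorem stmt7 {n K : ℕ} {m : Fin K → ℕ}
    (hne : (Finset.univ : Finset ((k : Fin K) × Fin (m k))).Nonempty)
    (w : Fin n → ℝ) (hw : ∀ l, 0 < w l)
    (s : (k : Fin K) × Fin (m k) → ℝ) (hs : ∀ i, 0 < s i)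
    (Z : Matrix (Fin n) ((k : Fin K) × Fin (m k)) ℝ)
    (hZbin : ∀ l i, Z l i = 0 ∨ Z l i = 1)
    (hZrow : ∀ l (k : Fin K), ∑ j : Fin (m k), Z l ⟨k, j⟩ = 1)
    (M : Matrix ((k : Fin K) × Fin (m k)) ((k : Fin K) × Fin (m k)) ℝ)
    (hM : M = Matrix.diagonal (fun i => (s i)⁻¹) + Zᵀ * Matrix.diagonal w * Z)
    (Mp : Matrix ((k : Fin K) × Fin (m k)) ((k : Fin K) × Fin (m k)) ℝ)
    (hMp : Mp = Matrix.diagonal (fun i => (Real.sqrt (M i i))⁻¹) * M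
        * Matrix.diagonal (fun i => (Real.sqrt (M i i))⁻¹))
    (hHerm : Mp.IsHermitian) :
    ∀ e : Fin (Fintype.card ((k : Fin K) × Fin (m k))) ≃ ((k : Fin K) × Fin (m k)),
      Monotone (fun t => hHerm.eigenvalues (e t)) →
      ∀ t : Fin (Fintype.card ((k : Fin K) × Fin (m k))), (t : ℕ) < K - 1 →
        (Finset.univ.sup' hne fun i => s i * M i i)⁻¹ ≤ hHerm.eigenvalues (e t)
        ∧ hHerm.eigenvalues (e t) ≤ (Finset.univ.inf' hne fun i => s i * M i i)⁻¹ :=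
  stmt7_general hne w hw s hs Z hZrow M hM Mp hMp hHerm
end

section
/- For K=2, a Gaussian likelihood, and a balanced design with d_k = n/m_k repeated observations per level of grouping k, the largest and smallest eigenvalues of the diagonal-preconditioned matrix are exactly λ_max = 1 + 1/√((σ²/(σ1² d1)+1)(σ²/(σ2² d2)+1)) and λ_min = 1 − 1/√((σ²/(σ1² d1)+1)(σ²/(σ2² d2)+1)). -/
open Matrix Finset

/-!
Both diagonal blocks of `M` are scalar: the columns of a 0/1 matrix with one `1` per row are
orthogonal, so `Z₁ᵀZ₁ = d₁ I` and `Z₂ᵀZ₂ = d₂ I`. After the diagonal rescaling the matrix is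
`I + e·[[0, Z₁ᵀZ₂], [Z₂ᵀZ₁, 0]]` with `e = σ⁻² / √(c₁c₂)`, `c_k = σ_k⁻² + d_k σ⁻²`. Its quadratic
form is `|x|² + |y|² + 2e⟨Z₁x, Z₂y⟩`, and Cauchy–Schwarz with `|Z_k v|² = d_k|v|²` confines every
eigenvalue to `[1 - ρ, 1 + ρ]`, `ρ = e√(d₁d₂)`. Both ends are attained, at `(√d₁ 𝟙, ±√d₂ 𝟙)`,
because `Z₁ᵀZ₂` has row sums `d₁` and column sums `d₂`.
-/

namespace Matrix

theorem dotProduct_sumType {m n α : Type*} [Fintype m] [Fintype n] [Mul α] [AddCommMonoid α]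
    (u v : m ⊕ n → α) :
    u ⬝ᵥ v = (u ∘ Sum.inl) ⬝ᵥ (v ∘ Sum.inl) + (u ∘ Sum.inr) ⬝ᵥ (v ∘ Sum.inr) :=
  Fintype.sum_sum_type _

theorem dotProduct_transpose_mul_mulVec {ι m n α : Type*} [Fintype ι] [Fintype m] [Fintype n]
    [CommSemiring α] (A : Matrix ι m α) (B : Matrix ι n α) (x : m → α) (y : n → α) :
    x ⬝ᵥ ((Aᵀ * B) *ᵥ y) = (A *ᵥ x) ⬝ᵥ (B *ᵥ y) := by
  rw [← mulVec_mulVec, dotProduct_mulVec, vecMul_transpose]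

end Matrix

theorem sq_dotProduct_le {ι : Type*} [Fintype ι] (u v : ι → ℝ) :
    (u ⬝ᵥ v) ^ 2 ≤ (u ⬝ᵥ u) * (v ⬝ᵥ v) := by
  simpa [dotProduct, sq] using sum_mul_sq_le_sq_mul_sq univ u v

theorem abs_two_mul_dotProduct_le {ι : Type*} [Fintype ι] {u v : ι → ℝ} {a b X Y : ℝ}
    (ha : 0 ≤ a) (hb : 0 ≤ b) (hX : 0 ≤ X) (hY : 0 ≤ Y) (hu : u ⬝ᵥ u = a * X)
    (hv : v ⬝ᵥ v = b * Y) :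
    |2 * (u ⬝ᵥ v)| ≤ √(a * b) * (X + Y) := by
  have hab : 0 ≤ a * b := mul_nonneg ha hb
  have hCS := sq_dotProduct_le u v
  rw [hu, hv] at hCS
  refine abs_le_of_sq_le_sq ?_ (by positivity)
  rw [mul_pow, mul_pow, Real.sq_sqrt hab]
  nlinarith [mul_nonneg hab (sq_nonneg (X - Y))]

namespace Matrix.IsHermitian

variable {n : Type*} [Fintype n] [DecidableEq n] {A : Matrix n n ℝ}

theorem exists_eigenvalues_eq (hA : A.IsHermitian) {z : n → ℝ} (hz : z ≠ 0) {μ : ℝ}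
    (h : A *ᵥ z = μ • z) : ∃ i, hA.eigenvalues i = μ := by
  have : Module.End.HasEigenvalue (toLin' A) μ :=
    Module.End.hasEigenvalue_of_hasEigenvector ⟨Module.End.mem_eigenspace_iff.mpr h, hz⟩
  rw [← Set.mem_range, ← hA.spectrum_real_eq_range_eigenvalues, ← spectrum_toLin']
  exact this.mem_spectrum

theorem eigenvalues_eq_dotProduct (hA : A.IsHermitian) (i : n) :
    hA.eigenvalues i = ⇑(hA.eigenvectorBasis i) ⬝ᵥ (A *ᵥ ⇑(hA.eigenvectorBasis i)) := by
  simpa using hA.eigenvalues_eq i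

theorem dotProduct_self_eigenvectorBasis (hA : A.IsHermitian) (i : n) :
    ⇑(hA.eigenvectorBasis i) ⬝ᵥ ⇑(hA.eigenvectorBasis i) = 1 := by
  have := real_inner_self_eq_norm_sq (hA.eigenvectorBasis i)
  rw [hA.eigenvectorBasis.orthonormal.1 i, EuclideanSpace.inner_eq_star_dotProduct] at this
  simpa using this

theorem eigenvalues_le (hA : A.IsHermitian) {b : ℝ} (h : ∀ z, z ⬝ᵥ (A *ᵥ z) ≤ b * (z ⬝ᵥ z))
    (i : n) : hA.eigenvalues i ≤ b := by
  simpa [← eigenvalues_eq_dotProduct, dotProduct_self_eigenvectorBasis] using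
    h (hA.eigenvectorBasis i)

theorem le_eigenvalues (hA : A.IsHermitian) {a : ℝ} (h : ∀ z, a * (z ⬝ᵥ z) ≤ z ⬝ᵥ (A *ᵥ z))
    (i : n) : a ≤ hA.eigenvalues i := by
  simpa [← eigenvalues_eq_dotProduct, dotProduct_self_eigenvectorBasis] using
    h (hA.eigenvectorBasis i)

variable [Nonempty n]

theorem sup'_eigenvalues_eq (hA : A.IsHermitian) {b : ℝ}
    (h : ∀ z, z ⬝ᵥ (A *ᵥ z) ≤ b * (z ⬝ᵥ z)) {z : n → ℝ} (hz : z ≠ 0) (hAz : A *ᵥ z = b • z) :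
    univ.sup' univ_nonempty hA.eigenvalues = b := by
  obtain ⟨i, hi⟩ := hA.exists_eigenvalues_eq hz hAz
  exact le_antisymm (sup'_le _ _ fun j _ => hA.eigenvalues_le h j)
    (hi ▸ le_sup' _ (mem_univ i))

theorem inf'_eigenvalues_eq (hA : A.IsHermitian) {a : ℝ}
    (h : ∀ z, a * (z ⬝ᵥ z) ≤ z ⬝ᵥ (A *ᵥ z)) {z : n → ℝ} (hz : z ≠ 0) (hAz : A *ᵥ z = a • z) :
    univ.inf' univ_nonempty hA.eigenvalues = a := by
  obtain ⟨i, hi⟩ := hA.exists_eigenvalues_eq hz hAz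
  exact le_antisymm (hi ▸ inf'_le _ (mem_univ i))
    (le_inf' _ _ fun j _ => hA.le_eigenvalues h j)

end Matrix.IsHermitian

section Incidence

variable {ι κ : Type*} [Fintype κ] [DecidableEq κ] {Z : Matrix ι κ ℝ}

theorem mul_eq_ite_of_binary_of_sum_eq_one (hbin : ∀ k j, Z k j = 0 ∨ Z k j = 1)
    (hrow : ∀ k, ∑ j, Z k j = 1) (k : ι) (j j' : κ) :
    Z k j * Z k j' = if j = j' then Z k j else 0 := by
  split_ifs with hjj
  · subst hjj
    rcases hbin k j with h | h <;> simp [h]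
  rcases hbin k j with h | h
  · simp [h]
  rcases hbin k j' with h' | h'
  · simp [h']
  have : ({j, j'} : Finset κ).sum (Z k) ≤ ∑ j, Z k j :=
    sum_le_sum_of_subset_of_nonneg (subset_univ _)
      fun x _ _ => by rcases hbin k x with h0 | h0 <;> simp [h0]
  rw [sum_pair hjj, h, h', hrow k] at this
  norm_num at this

theorem transpose_mul_self_eq_smul_one_of_binary [Fintype ι]
    (hbin : ∀ k j, Z k j = 0 ∨ Z k j = 1) (hrow : ∀ k, ∑ j, Z k j = 1) {d : ℝ}
    (hcol : ∀ j, ∑ k, Z k j = d) :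
    Zᵀ * Z = d • 1 := by
  ext j j'
  simp only [mul_apply, transpose_apply, mul_eq_ite_of_binary_of_sum_eq_one hbin hrow,
    Matrix.smul_apply, one_apply, smul_eq_mul]
  split_ifs <;> simp [hcol]

theorem dotProduct_self_mulVec_of_binary [Fintype ι] (hbin : ∀ k j, Z k j = 0 ∨ Z k j = 1)
    (hrow : ∀ k, ∑ j, Z k j = 1) {d : ℝ} (hcol : ∀ j, ∑ k, Z k j = d) (x : κ → ℝ) :
    (Z *ᵥ x) ⬝ᵥ (Z *ᵥ x) = d * (x ⬝ᵥ x) := by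
  rw [← dotProduct_transpose_mul_mulVec, transpose_mul_self_eq_smul_one_of_binary hbin hrow hcol,
    smul_mulVec, one_mulVec, dotProduct_smul, smul_eq_mul]

end Incidence

theorem transpose_mul_mulVec_const {ι κ₁ κ₂ : Type*} [Fintype ι] [Fintype κ₂]
    {Z₁ : Matrix ι κ₁ ℝ} {Z₂ : Matrix ι κ₂ ℝ} (hrow₂ : ∀ k, ∑ j, Z₂ k j = 1) {d₁ : ℝ}
    (hcol₁ : ∀ j, ∑ k, Z₁ k j = d₁) (c : ℝ) :
    (Z₁ᵀ * Z₂) *ᵥ (fun _ => c) = fun _ => d₁ * c := by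
  have hZ₂ : Z₂ *ᵥ (fun _ => c) = fun _ => c := by
    ext k
    simp [mulVec, dotProduct, ← sum_mul, hrow₂]
  rw [← mulVec_mulVec, hZ₂]
  ext j
  simp [mulVec, dotProduct, ← sum_mul, hcol₁]

section Bipartite

variable {ι κ₁ κ₂ : Type*} [Fintype ι] [Fintype κ₁] [Fintype κ₂] [DecidableEq κ₁] [DecidableEq κ₂]
  {Z₁ : Matrix ι κ₁ ℝ} {Z₂ : Matrix ι κ₂ ℝ}

theorem dotProduct_fromBlocks_mulVec (e : ℝ) (z : κ₁ ⊕ κ₂ → ℝ) :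
    z ⬝ᵥ (fromBlocks 1 (e • (Z₁ᵀ * Z₂)) (e • (Z₂ᵀ * Z₁)) 1 *ᵥ z)
      = z ⬝ᵥ z + 2 * e * ((Z₁ *ᵥ (z ∘ Sum.inl)) ⬝ᵥ (Z₂ *ᵥ (z ∘ Sum.inr))) := by
  rw [fromBlocks_mulVec, dotProduct_sumType, dotProduct_sumType z z]
  simp only [Sum.elim_comp_inl, Sum.elim_comp_inr, one_mulVec, dotProduct_add, smul_mulVec,
    dotProduct_smul, dotProduct_transpose_mul_mulVec, smul_eq_mul]
  rw [dotProduct_comm (Z₂ *ᵥ _)]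
  ring

theorem abs_dotProduct_fromBlocks_mulVec_sub_le (hbin₁ : ∀ k j, Z₁ k j = 0 ∨ Z₁ k j = 1)
    (hbin₂ : ∀ k j, Z₂ k j = 0 ∨ Z₂ k j = 1) (hrow₁ : ∀ k, ∑ j, Z₁ k j = 1)
    (hrow₂ : ∀ k, ∑ j, Z₂ k j = 1) {d₁ d₂ : ℝ} (hd₁ : 0 ≤ d₁) (hd₂ : 0 ≤ d₂)
    (hcol₁ : ∀ j, ∑ k, Z₁ k j = d₁) (hcol₂ : ∀ j, ∑ k, Z₂ k j = d₂) {e : ℝ} (he : 0 ≤ e)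
    (z : κ₁ ⊕ κ₂ → ℝ) :
    |z ⬝ᵥ (fromBlocks 1 (e • (Z₁ᵀ * Z₂)) (e • (Z₂ᵀ * Z₁)) 1 *ᵥ z) - z ⬝ᵥ z|
      ≤ e * √(d₁ * d₂) * (z ⬝ᵥ z) := by
  have hCS := abs_two_mul_dotProduct_le hd₁ hd₂
    (by simpa using dotProduct_self_star_nonneg (z ∘ Sum.inl))
    (by simpa using dotProduct_self_star_nonneg (z ∘ Sum.inr))
    (dotProduct_self_mulVec_of_binary hbin₁ hrow₁ hcol₁ (z ∘ Sum.inl))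
    (dotProduct_self_mulVec_of_binary hbin₂ hrow₂ hcol₂ (z ∘ Sum.inr))
  rw [dotProduct_fromBlocks_mulVec, add_sub_cancel_left, dotProduct_sumType z z, mul_comm 2 e,
    mul_assoc, abs_mul, abs_of_nonneg he, mul_assoc]
  exact mul_le_mul_of_nonneg_left hCS he

theorem fromBlocks_mulVec_sqrt_eq_smul (hrow₁ : ∀ k, ∑ j, Z₁ k j = 1)
    (hrow₂ : ∀ k, ∑ j, Z₂ k j = 1) {d₁ d₂ : ℝ} (hd₁ : 0 ≤ d₁) (hd₂ : 0 ≤ d₂)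
    (hcol₁ : ∀ j, ∑ k, Z₁ k j = d₁) (hcol₂ : ∀ j, ∑ k, Z₂ k j = d₂) (e s : ℝ)
    (hs : s * s = 1) :
    fromBlocks 1 (e • (Z₁ᵀ * Z₂)) (e • (Z₂ᵀ * Z₁)) 1
        *ᵥ Sum.elim (fun _ => √d₁) (fun _ => s * √d₂)
      = (1 + s * (e * √(d₁ * d₂))) • Sum.elim (fun _ => √d₁) (fun _ => s * √d₂) := by
  rw [fromBlocks_mulVec]
  simp only [Sum.elim_comp_inl, Sum.elim_comp_inr, one_mulVec, smul_mulVec,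
    transpose_mul_mulVec_const hrow₂ hcol₁, transpose_mul_mulVec_const hrow₁ hcol₂,
    Real.sqrt_mul hd₁]
  ext (j | l) <;> simp only [Sum.elim_inl, Sum.elim_inr, Pi.add_apply, Pi.smul_apply, smul_eq_mul]
  · linear_combination -(e * s * √d₂) * Real.mul_self_sqrt hd₁
  · linear_combination -(e * √d₁) * Real.mul_self_sqrt hd₂ - e * √d₁ * (√d₂ * √d₂) * hs

theorem diagonal_inv_sqrt_mul_fromBlocks_mul {c₁ c₂ : ℝ} (hc₁ : 0 < c₁) (hc₂ : 0 < c₂)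
    (B : Matrix κ₁ κ₂ ℝ) (C : Matrix κ₂ κ₁ ℝ) :
    let M := fromBlocks (c₁ • 1) B C (c₂ • 1)
    diagonal (fun i => (√(M i i))⁻¹) * M * diagonal (fun i => (√(M i i))⁻¹)
      = fromBlocks 1 ((√(c₁ * c₂))⁻¹ • B) ((√(c₁ * c₂))⁻¹ • C) 1 := by
  intro M
  have h₁ : (√c₁)⁻¹ * c₁ * (√c₁)⁻¹ = 1 := by
    field_simp; exact (Real.sq_sqrt hc₁.le).symm
  have h₂ : (√c₂)⁻¹ * c₂ * (√c₂)⁻¹ = 1 := by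
    field_simp; exact (Real.sq_sqrt hc₂.le).symm
  ext (i | i) (j | j) <;>
    simp [M, mul_diagonal, diagonal_mul, one_apply, Real.sqrt_mul hc₁.le] <;>
    first | (split_ifs <;> simp [h₁, h₂]) | ring

end Bipartite

theorem diagonal_add_transpose_fromCols_mul_diagonal_const {ι κ₁ κ₂ : Type*} [Fintype ι]
    [DecidableEq ι] [DecidableEq κ₁] [DecidableEq κ₂] (a₁ a₂ t : ℝ) (Z₁ : Matrix ι κ₁ ℝ)
    (Z₂ : Matrix ι κ₂ ℝ) :
    diagonal (Sum.elim (fun _ => a₁) (fun _ => a₂))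
        + (fromCols Z₁ Z₂)ᵀ * diagonal (fun _ : ι => t) * fromCols Z₁ Z₂
      = fromBlocks (a₁ • 1 + t • (Z₁ᵀ * Z₁)) (t • (Z₁ᵀ * Z₂)) (t • (Z₂ᵀ * Z₁))
          (a₂ • 1 + t • (Z₂ᵀ * Z₂)) := by
  rw [← smul_one_eq_diagonal, Matrix.mul_smul, Matrix.mul_one, Matrix.smul_mul, transpose_fromCols,
    fromRows_mul_fromCols, ← fromBlocks_diagonal, fromBlocks_smul, fromBlocks_add]
  simp [smul_one_eq_diagonal]

theorem inv_mul_inv_sqrt_mul_sqrt_eq {σsq σ1sq σ2sq d1 d2 : ℝ} (hσ : 0 < σsq) (hσ1 : 0 < σ1sq)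
    (hσ2 : 0 < σ2sq) (hd1 : 0 < d1) (hd2 : 0 < d2) :
    σsq⁻¹ * (√((σ1sq⁻¹ + σsq⁻¹ * d1) * (σ2sq⁻¹ + σsq⁻¹ * d2)))⁻¹ * √(d1 * d2)
      = 1 / √((σsq / (σ1sq * d1) + 1) * (σsq / (σ2sq * d2) + 1)) := by
  have hc : (σ1sq⁻¹ + σsq⁻¹ * d1) * (σ2sq⁻¹ + σsq⁻¹ * d2)
      = (√(d1 * d2) / σsq) ^ 2 * ((σsq / (σ1sq * d1) + 1) * (σsq / (σ2sq * d2) + 1)) := by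
    rw [div_pow, Real.sq_sqrt (by positivity)]
    field_simp
  rw [hc, Real.sqrt_mul (by positivity), Real.sqrt_sq (by positivity)]
  field_simp

/-- For `K = 2`, a Gaussian likelihood, and a balanced design with
`d_k` repeated observations per level of grouping `k`, the largest and smallest
eigenvalues of the diagonal-preconditioned matrix are exactly
`λ_max = 1 + 1/√((σ²/(σ1²d1)+1)(σ²/(σ2²d2)+1))` and
`λ_min = 1 − 1/√((σ²/(σ1²d1)+1)(σ²/(σ2²d2)+1))`. -/
theorem stmt9 {n m1 m2 : ℕ} [NeZero m1] [NeZero m2] (d1 d2 : ℕ) (hd1 : 0 < d1) (hd2 : 0 < d2)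
    (σsq σ1sq σ2sq : ℝ) (hσ : 0 < σsq) (hσ1 : 0 < σ1sq) (hσ2 : 0 < σ2sq)
    (Z1 : Matrix (Fin n) (Fin m1) ℝ) (Z2 : Matrix (Fin n) (Fin m2) ℝ)
    (hZ1bin : ∀ k j, Z1 k j = 0 ∨ Z1 k j = 1)
    (hZ2bin : ∀ k j, Z2 k j = 0 ∨ Z2 k j = 1)
    (hZ1row : ∀ k, ∑ j, Z1 k j = 1) (hZ2row : ∀ k, ∑ j, Z2 k j = 1)
    (hZ1col : ∀ j, ∑ k, Z1 k j = (d1 : ℝ)) (hZ2col : ∀ j, ∑ k, Z2 k j = (d2 : ℝ))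
    (w : Fin n → ℝ) (hw : ∀ k, w k = σsq⁻¹)
    (sinv : Fin m1 ⊕ Fin m2 → ℝ)
    (hsinv : sinv = Sum.elim (fun _ => σ1sq⁻¹) (fun _ => σ2sq⁻¹))
    (M : Matrix (Fin m1 ⊕ Fin m2) (Fin m1 ⊕ Fin m2) ℝ)
    (hM : M = Matrix.diagonal sinv
        + (fromCols Z1 Z2)ᵀ * Matrix.diagonal w * fromCols Z1 Z2)
    (Mp : Matrix (Fin m1 ⊕ Fin m2) (Fin m1 ⊕ Fin m2) ℝ)
    (hMp : Mp = Matrix.diagonal (fun i => (Real.sqrt (M i i))⁻¹) * M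
        * Matrix.diagonal (fun i => (Real.sqrt (M i i))⁻¹))
    (hHerm : Mp.IsHermitian) :
    Finset.univ.sup' Finset.univ_nonempty hHerm.eigenvalues
      = 1 + 1 / Real.sqrt ((σsq / (σ1sq * d1) + 1) * (σsq / (σ2sq * d2) + 1))
    ∧ Finset.univ.inf' Finset.univ_nonempty hHerm.eigenvalues
      = 1 - 1 / Real.sqrt ((σsq / (σ1sq * d1) + 1) * (σsq / (σ2sq * d2) + 1)) := by
  have hd1R : (0 : ℝ) < d1 := Nat.cast_pos.mpr hd1
  have hd2R : (0 : ℝ) < d2 := Nat.cast_pos.mpr hd2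
  set c1 := σ1sq⁻¹ + σsq⁻¹ * d1
  set c2 := σ2sq⁻¹ + σsq⁻¹ * d2
  set e := σsq⁻¹ * (√(c1 * c2))⁻¹
  have hMblocks : M = fromBlocks (c1 • 1) (σsq⁻¹ • (Z1ᵀ * Z2)) (σsq⁻¹ • (Z2ᵀ * Z1)) (c2 • 1) := by
    rw [hM, hsinv, show w = fun _ => σsq⁻¹ from funext hw,
      diagonal_add_transpose_fromCols_mul_diagonal_const,
      transpose_mul_self_eq_smul_one_of_binary hZ1bin hZ1row hZ1col,
      transpose_mul_self_eq_smul_one_of_binary hZ2bin hZ2row hZ2col, smul_smul, smul_smul,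
      ← add_smul, ← add_smul]
  have hMpblocks : Mp = fromBlocks 1 (e • (Z1ᵀ * Z2)) (e • (Z2ᵀ * Z1)) 1 := by
    rw [hMp, hMblocks, diagonal_inv_sqrt_mul_fromBlocks_mul (by positivity) (by positivity),
      smul_smul, smul_smul, mul_comm _ σsq⁻¹]
  have hquad := abs_dotProduct_fromBlocks_mulVec_sub_le hZ1bin hZ2bin hZ1row hZ2row hd1R.le
    hd2R.le hZ1col hZ2col (by positivity : 0 ≤ e)
  have heig := fromBlocks_mulVec_sqrt_eq_smul hZ1row hZ2row hd1R.le hd2R.le hZ1col hZ2col e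
  have hne : ∀ s : ℝ, (Sum.elim (fun _ => √(d1 : ℝ)) (fun _ => s * √(d2 : ℝ)) :
      Fin m1 ⊕ Fin m2 → ℝ) ≠ 0 := fun s h => by
    simpa [hd1.ne'] using congrFun h (Sum.inl 0)
  rw [← hMpblocks] at hquad heig
  rw [← inv_mul_inv_sqrt_mul_sqrt_eq hσ hσ1 hσ2 hd1R hd2R]
  constructor
  · refine hHerm.sup'_eigenvalues_eq (fun z => ?_) (hne 1) (by simpa using heig 1 (by norm_num))
    linarith [(abs_le.mp (hquad z)).2]
  · refine hHerm.inf'_eigenvalues_eq (fun z => ?_) (hne (-1)) ?_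
    · linarith [(abs_le.mp (hquad z)).1]
    · convert heig (-1) (by norm_num) using 2; ring
end

section
/- For K=2, Gaussian likelihood, and balanced design with d repeated observations per random effect, the SSOR preconditioner strictly dominates the diagonal preconditioner at the extremes: λ_max^SSOR < λ_max^Diag and λ_min^SSOR > λ_min^Diag. -/
/-! Both `a = σ²/(σ1²d) + 1` and `b = σ²/(σ2²d) + 1` exceed `1`, so
`1 / √(ab)` is positive, which gives the first inequality, and `√(ab) < ab` gives
`1 / (ab) < 1 / √(ab)`, which is the second. -/

lemma Real.one_div_lt_one_div_sqrt {x : ℝ} (hx : 1 < x) : 1 / x < 1 / √x :=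
  one_div_lt_one_div_of_lt (Real.sqrt_pos.mpr (by linarith)) (Real.sqrt_lt_self_iff.mpr hx)

lemma one_lt_div_mul_add_one {s t d : ℝ} (hs : 0 < s) (ht : 0 < t) (hd : 0 < d) :
    1 < s / (t * d) + 1 :=
  lt_add_of_pos_left 1 (div_pos hs (mul_pos ht hd))

/-- For `K = 2`, Gaussian likelihood, and balanced design with `d`
repeated observations per random effect, the SSOR preconditioner strictly dominates the
diagonal preconditioner at the extremes: with
`λ_max^SSOR = 1`, `λ_min^SSOR = 1 − (1/(σ²/(σ1²d)+1))·(1/(σ²/(σ2²d)+1))`,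
`λ_max^Diag = 1 + 1/√((σ²/(σ1²d)+1)(σ²/(σ2²d)+1))` and
`λ_min^Diag = 1 − 1/√((σ²/(σ1²d)+1)(σ²/(σ2²d)+1))`, we have
`λ_max^SSOR < λ_max^Diag` and `λ_min^SSOR > λ_min^Diag`. -/
theorem stmt13 (σsq σ1sq σ2sq d : ℝ) (hσ : 0 < σsq) (hσ1 : 0 < σ1sq) (hσ2 : 0 < σ2sq)
    (hd : 0 < d) :
    (1 : ℝ) < 1 + 1 / Real.sqrt ((σsq / (σ1sq * d) + 1) * (σsq / (σ2sq * d) + 1))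
    ∧ 1 - 1 / Real.sqrt ((σsq / (σ1sq * d) + 1) * (σsq / (σ2sq * d) + 1))
      < 1 - (1 / (σsq / (σ1sq * d) + 1)) * (1 / (σsq / (σ2sq * d) + 1)) := by
  set a := σsq / (σ1sq * d) + 1
  set b := σsq / (σ2sq * d) + 1
  have hab : 1 < a * b :=
    one_lt_mul_of_lt_of_le (one_lt_div_mul_add_one hσ hσ1 hd)
      (one_lt_div_mul_add_one hσ hσ2 hd).le
  constructor
  · exact lt_add_of_pos_right 1 (by positivity)
  · rw [div_mul_div_comm, one_mul]
    exact sub_lt_sub_left (Real.one_div_lt_one_div_sqrt hab) 1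
end
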